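/- arXiv:0912.4895 — 2 statements merged into one kernel-verified Lean document; each statement's English description precedes it below -/
import Mathlib

section
/- In the algebra k⟨x,y⟩ modulo the two-sided ideal generated by y² and x²y + xyx + yx², the element xyxy − yxyx lies in the ideal; equivalently, xyxy = yxyx holds in the quotient algebra bv. -/
/-!
The algebra `bv = k⟨x,y⟩/(y², x²y + xyx + yx²)`.  We model it as the quotient of
the free associative algebra on two generators by the ring congruence (two-sided
ideal) generated by the two relations.  Claim: `xyxy = yxyx` holds in `bv`.
-/

noncomputable section

/-- The free associative algebra `ℚ⟨x,y⟩`. -/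
abbrev FA := FreeAlgebra ℚ (Fin 2)

/-- The generator `x`. -/
noncomputable def X : FA := FreeAlgebra.ι ℚ 0

/-- The generator `y`. -/
noncomputable def Y : FA := FreeAlgebra.ι ℚ 1

/-- The relations `y² = 0` and `x²y + xyx + yx² = 0` generating the two-sided ideal. -/
inductive bvRel : FA → FA → Prop
  | rel1 : bvRel (Y * Y) 0
  | rel2 : bvRel (X * X * Y + X * Y * X + Y * X * X) 0

/-- The algebra `bv = ℚ⟨x,y⟩/(y², x²y + xyx + yx²)`. -/
abbrev bv := RingQuot bvRel

/-- In `bv`, the element `xyxy − yxyx` vanishes; equivalently `xyxy = yxyx`. -/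
theorem bv_xyxy_eq_yxyx :
    RingQuot.mkAlgHom ℚ bvRel (X * Y * X * Y) =
      RingQuot.mkAlgHom ℚ bvRel (Y * X * Y * X) := by
  have h1 : RingQuot.mkAlgHom ℚ bvRel (Y * Y) = 0 := by
    rw [RingQuot.mkAlgHom_rel ℚ bvRel.rel1, map_zero]
  have h2 : RingQuot.mkAlgHom ℚ bvRel (X * X * Y + X * Y * X + Y * X * X) = 0 := by
    rw [RingQuot.mkAlgHom_rel ℚ bvRel.rel2, map_zero]
  have key : X * Y * X * Y =
      Y * X * Y * X +
        ((X * X * Y + X * Y * X + Y * X * X) * Y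
          - Y * (X * X * Y + X * Y * X + Y * X * X)
          - X * X * (Y * Y) + (Y * Y) * (X * X)) := by
    noncomm_ring
  rw [key]
  simp only [map_add, map_sub, map_mul, h1, h2, zero_mul, mul_zero,
    sub_zero, add_zero, zero_sub, sub_self, neg_zero]

end
end

section
/- For n ≥ 2 and k ≥ 1, the number of ordered sequences (λ₁,...,λ_k) where λ_i is a left-combed 'Lie monomial' of arity m_i (counted by (m_i − 1)! for each arity), placed in a shuffle tree of type (m₁,...,m_k) with m₁+...+m_k = n, m_i ≥ 1, m_k ≥ 2, equals Σ_{m₁+...+m_k=n, m_k≥2} (m₁−1)!···(m_k−1)! · m₁···m_k /((m₁+...+m_k)(m₂+...+m_k)···m_k) · multinomial(n; m₁,...,m_k), and this equals (n−1)! times the elementary symmetric polynomial e_{k−1}(1/2, 1/3, ..., 1/(n−1)). -/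
/-!
Since `(mᵢ - 1)! · mᵢ = mᵢ!` and `n! = n · (n - 1)!`, the summand of type `m` collapses to
`(n - 1)! / (S₁ ⋯ S_{k-1})`, where `Sᵢ = m_{i+1} + ⋯ + m_k` are the suffix sums (`S₀ = n`).
Positive parts make `n = S₀ > S₁ > ⋯ > S_{k-1} = m_k ≥ 2`, so `m ↦ {S₁, …, S_{k-1}}` maps the
compositions onto the `(k - 1)`-subsets of `{2, …, n - 1}`; it is a bijection, inverted by
listing `n` followed by the subset in decreasing order and taking successive differences.
-/

open Finset
open scoped Nat

namespace List

theorem SortedGE.antitone_getD {l : List ℕ} (hl : l.SortedGE) : Antitone (l.getD · 0) :=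
  antitone_nat_of_succ_le fun i => by
    rcases lt_or_ge (i + 1) l.length with hi | hi
    · rw [getD_eq_getElem _ _ hi, getD_eq_getElem _ _ (by omega)]
      exact hl.pairwise.rel_get_of_lt (a := ⟨i, by omega⟩) (b := ⟨i + 1, hi⟩) (by simp)
    · rw [getD_eq_default _ _ hi]
      exact Nat.zero_le _

theorem SortedGT.getD_succ_lt {l : List ℕ} (hl : l.SortedGT) (h0 : 0 ∉ l) {i : ℕ}
    (hi : i < l.length) : l.getD (i + 1) 0 < l.getD i 0 := by
  rw [getD_eq_getElem _ _ hi]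
  rcases lt_or_ge (i + 1) l.length with hi' | hi'
  · rw [getD_eq_getElem _ _ hi']
    exact hl.getElem_lt_getElem_iff.mpr (by omega)
  · rw [getD_eq_default _ _ hi']
    exact Nat.pos_of_ne_zero fun h => h0 (h ▸ getElem_mem hi)

theorem image_range_getD {α : Type*} [DecidableEq α] (l : List α) (d : α) :
    (Finset.range l.length).image (l.getD · d) = l.toFinset := by
  ext a
  simp only [Finset.mem_image, Finset.mem_range, mem_toFinset, mem_iff_getElem]
  constructor
  · rintro ⟨i, hi, rfl⟩
    exact ⟨i, hi, (getD_eq_getElem _ _ hi).symm⟩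
  · rintro ⟨i, hi, rfl⟩
    exact ⟨i, hi, getD_eq_getElem _ _ hi⟩

end List

namespace LieMonomialCount

section SuffixSums

variable {k : ℕ} (m : Fin k → ℕ)

def suffixSum (i : ℕ) : ℕ := ∑ j ∈ univ.filter (fun j : Fin k => i ≤ (j : ℕ)), m j

theorem suffixSum_zero : suffixSum m 0 = ∑ i, m i := by
  simp [suffixSum]

theorem suffixSum_of_le {i : ℕ} (h : k ≤ i) : suffixSum m i = 0 :=
  sum_eq_zero fun j hj => absurd (mem_filter.mp hj).2 (by omega)

theorem suffixSum_eq_add {i : ℕ} (h : i < k) :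
    suffixSum m i = m ⟨i, h⟩ + suffixSum m (i + 1) := by
  have : univ.filter (fun j : Fin k => i ≤ (j : ℕ)) =
      insert ⟨i, h⟩ (univ.filter fun j : Fin k => i + 1 ≤ (j : ℕ)) := by
    ext j
    simp only [mem_filter, mem_univ, true_and, mem_insert, Fin.ext_iff]
    omega
  rw [suffixSum, this, sum_insert (by simp), suffixSum]

variable {m}

theorem strictAntiOn_suffixSum (hm : ∀ j, 1 ≤ m j) : StrictAntiOn (suffixSum m) (Set.Iic k) :=
  strictAntiOn_Iic_of_succ_lt fun i hi => by
    have := suffixSum_eq_add m hi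
    have := hm ⟨i, hi⟩
    simp only [Order.succ_eq_add_one]
    omega

end SuffixSums

def ofSuffixSums (k : ℕ) (s : ℕ → ℕ) : Fin k → ℕ := fun i => s i - s (i + 1)

theorem ofSuffixSums_suffixSum {k : ℕ} (m : Fin k → ℕ) : ofSuffixSums k (suffixSum m) = m := by
  funext i
  have := suffixSum_eq_add m i.isLt
  simp only [ofSuffixSums, this, Fin.eta]
  omega

theorem suffixSum_ofSuffixSums {k : ℕ} {s : ℕ → ℕ} (hs : Antitone s) (hk : s k = 0) :
    suffixSum (ofSuffixSums k s) = s := by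
  funext i
  induction hd : k - i generalizing i with
  | zero =>
    have : s i = 0 := Nat.eq_zero_of_le_zero (hk ▸ hs (by omega))
    rw [suffixSum_of_le _ (by omega), this]
  | succ d ih =>
    rw [suffixSum_eq_add _ (by omega), ih (i + 1) (by omega)]
    exact Nat.sub_add_cancel (hs (Nat.le_succ i))

def compositionsLastGeTwo (n k : ℕ) (hk : 1 ≤ k) : Finset (Fin k → ℕ) :=
  (Fintype.piFinset fun _ : Fin k => range (n + 1)).filter fun m =>
    (∑ i, m i) = n ∧ (∀ i, 1 ≤ m i) ∧ 2 ≤ m ⟨k - 1, by omega⟩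

theorem mem_compositionsLastGeTwo {n k : ℕ} {hk : 1 ≤ k} {m : Fin k → ℕ} :
    m ∈ compositionsLastGeTwo n k hk ↔
      (∑ i, m i) = n ∧ (∀ i, 1 ≤ m i) ∧ 2 ≤ m ⟨k - 1, by omega⟩ := by
  refine mem_filter.trans (and_iff_right_of_imp fun ⟨hsum, _⟩ => Fintype.mem_piFinset.mpr
    fun i => mem_range.mpr (Nat.lt_succ_of_le (hsum ▸ single_le_sum (by simp) (mem_univ i))))

def suffixSet {k : ℕ} (m : Fin k → ℕ) : Finset ℕ :=
  (range (k - 1)).image fun i => suffixSum m (i + 1)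

theorem injOn_suffixSum_succ {k : ℕ} {m : Fin k → ℕ} (hm : ∀ j, 1 ≤ m j) :
    Set.InjOn (fun i => suffixSum m (i + 1)) (range (k - 1)) := fun a ha b hb hab =>
  Nat.succ_injective <| (strictAntiOn_suffixSum hm).injOn
    (by simp only [coe_range, Set.mem_Iio] at ha; simp; omega)
    (by simp only [coe_range, Set.mem_Iio] at hb; simp; omega) hab

theorem suffixSet_mem_powersetCard {n k : ℕ} {hk : 1 ≤ k} {m : Fin k → ℕ}
    (hm : m ∈ compositionsLastGeTwo n k hk) :
    suffixSet m ∈ (Icc 2 (n - 1)).powersetCard (k - 1) := by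
  obtain ⟨hsum, hpos, hlast⟩ := mem_compositionsLastGeTwo.mp hm
  have hanti := strictAntiOn_suffixSum hpos
  refine mem_powersetCard.mpr ⟨fun x hx => ?_, ?_⟩
  · obtain ⟨i, hi, rfl⟩ := mem_image.mp hx
    rw [mem_range] at hi
    have hlt : suffixSum m (i + 1) < suffixSum m 0 :=
      hanti (by simp) (by simp; omega) (Nat.succ_pos i)
    have hge : suffixSum m (k - 1) ≤ suffixSum m (i + 1) :=
      hanti.antitoneOn (by simp; omega) (by simp) (by omega)
    rw [suffixSum_eq_add m (by omega), suffixSum_of_le m (by omega)] at hge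
    rw [suffixSum_zero, hsum] at hlt
    rw [mem_Icc]
    omega
  · rw [suffixSet, Finset.card_image_of_injOn (injOn_suffixSum_succ hpos), card_range]

def suffixSeq (n : ℕ) (S : Finset ℕ) (i : ℕ) : ℕ :=
  (n :: S.sort (· ≥ ·)).getD i 0

section SuffixSeq

variable {n k : ℕ} {S : Finset ℕ}

theorem two_le_of_mem_cons_sort (hn : 2 ≤ n) (hS : S ⊆ Icc 2 (n - 1)) {a : ℕ}
    (ha : a ∈ n :: S.sort (· ≥ ·)) : 2 ≤ a := by
  rcases List.mem_cons.mp ha with rfl | ha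
  · exact hn
  · exact (mem_Icc.mp (hS ((mem_sort _).mp ha))).1

theorem sortedGT_cons_sort (hS : S ⊆ Icc 2 (n - 1)) : (n :: S.sort (· ≥ ·)).SortedGT := by
  refine List.sortedGT_iff_pairwise.mpr (List.pairwise_cons.mpr ⟨fun a ha => ?_, ?_⟩)
  · have := mem_Icc.mp (hS ((mem_sort _).mp ha))
    show a < n
    omega
  · exact List.sortedGT_iff_pairwise.mp (sortedGT_sort S)

theorem suffixSeq_of_card_lt {i : ℕ} (h : #S < i) : suffixSeq n S i = 0 :=
  List.getD_eq_default _ _ (by simpa using h)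

theorem two_le_suffixSeq (hn : 2 ≤ n) (hS : S ⊆ Icc 2 (n - 1)) {i : ℕ} (hi : i ≤ #S) :
    2 ≤ suffixSeq n S i := by
  have hi' : i < (n :: S.sort (· ≥ ·)).length := by simpa [Nat.lt_succ_iff] using hi
  rw [suffixSeq, List.getD_eq_getElem _ _ hi']
  exact two_le_of_mem_cons_sort hn hS (List.getElem_mem hi')

theorem suffixSeq_succ_lt (hn : 2 ≤ n) (hS : S ⊆ Icc 2 (n - 1)) {i : ℕ} (hi : i ≤ #S) :
    suffixSeq n S (i + 1) < suffixSeq n S i :=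
  (sortedGT_cons_sort hS).getD_succ_lt
    (fun h => by have := two_le_of_mem_cons_sort hn hS h; omega)
    (by simpa [Nat.lt_succ_iff] using hi)

theorem suffixSum_ofSuffixSums_suffixSeq (hk : 1 ≤ k) (hS : S ⊆ Icc 2 (n - 1))
    (hcard : #S = k - 1) : suffixSum (ofSuffixSums k (suffixSeq n S)) = suffixSeq n S :=
  suffixSum_ofSuffixSums (sortedGT_cons_sort hS).sortedGE.antitone_getD
    (suffixSeq_of_card_lt (by omega))

theorem ofSuffixSums_suffixSeq_mem (hn : 2 ≤ n) (hk : 1 ≤ k)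
    (hS : S ∈ (Icc 2 (n - 1)).powersetCard (k - 1)) :
    ofSuffixSums k (suffixSeq n S) ∈ compositionsLastGeTwo n k hk := by
  obtain ⟨hsub, hcard⟩ := mem_powersetCard.mp hS
  have hsum := congrFun (suffixSum_ofSuffixSums_suffixSeq hk hsub hcard) 0
  rw [suffixSum_zero] at hsum
  refine mem_compositionsLastGeTwo.mpr ⟨hsum, fun i => ?_, ?_⟩
  · have := suffixSeq_succ_lt hn hsub (i := i) (by omega)
    simp only [ofSuffixSums]
    omega
  · have := two_le_suffixSeq hn hsub (i := k - 1) (by omega)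
    simp only [ofSuffixSums, Nat.sub_add_cancel hk,
      suffixSeq_of_card_lt (n := n) (show #S < k by omega)]
    omega

theorem suffixSet_ofSuffixSums_suffixSeq (hk : 1 ≤ k)
    (hS : S ∈ (Icc 2 (n - 1)).powersetCard (k - 1)) :
    suffixSet (ofSuffixSums k (suffixSeq n S)) = S := by
  obtain ⟨hsub, hcard⟩ := mem_powersetCard.mp hS
  have hlen : k - 1 = (S.sort (· ≥ ·)).length := by simp [hcard]
  rw [suffixSet, suffixSum_ofSuffixSums_suffixSeq hk hsub hcard]
  simp only [suffixSeq, List.getD_cons_succ]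
  rw [hlen, List.image_range_getD, sort_toFinset]

end SuffixSeq

theorem suffixSeq_suffixSet {k : ℕ} {m : Fin k → ℕ} (hm : ∀ j, 1 ≤ m j) :
    suffixSeq (∑ i, m i) (suffixSet m) = suffixSum m := by
  set L := (List.range (k - 1)).map fun i => suffixSum m (i + 1)
  have hL : L.Pairwise (· > ·) :=
    List.pairwise_map.mpr <| List.pairwise_lt_range.imp_of_mem fun ha hb hab =>
      strictAntiOn_suffixSum hm (by simp at ha ⊢; omega) (by simp at hb ⊢; omega) (by omega)
  have hsort : (suffixSet m).sort (· ≥ ·) = L := by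
    have : suffixSet m = L.toFinset := by ext; simp [suffixSet, L]
    rw [this, List.toFinset_sort _ hL.nodup]
    exact hL.imp le_of_lt
  funext i
  rcases i with _ | i
  · simp [suffixSeq, suffixSum_zero]
  · rw [suffixSeq, hsort, List.getD_cons_succ]
    rcases lt_or_ge i (k - 1) with hi | hi
    · rw [List.getD_eq_getElem _ _ (by simpa [L] using hi)]
      simp [L]
    · rw [List.getD_eq_default _ _ (by simpa [L] using hi), suffixSum_of_le m (by omega)]

theorem sum_compositionsLastGeTwo_suffixSet {M : Type*} [AddCommMonoid M] {n k : ℕ}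
    (hn : 2 ≤ n) (hk : 1 ≤ k) (f : Finset ℕ → M) :
    ∑ m ∈ compositionsLastGeTwo n k hk, f (suffixSet m) =
      ∑ S ∈ (Icc 2 (n - 1)).powersetCard (k - 1), f S := by
  refine sum_nbij' suffixSet (fun S => ofSuffixSums k (suffixSeq n S))
    (fun m hm => suffixSet_mem_powersetCard hm)
    (fun S hS => ofSuffixSums_suffixSeq_mem hn hk hS) (fun m hm => ?_)
    (fun S hS => suffixSet_ofSuffixSums_suffixSeq hk hS) (fun _ _ => rfl)
  obtain ⟨hsum, hpos, -⟩ := mem_compositionsLastGeTwo.mp hm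
  rw [← hsum, suffixSeq_suffixSet hpos, ofSuffixSums_suffixSum]

theorem prod_factorial_div_prod_suffixSum_eq {n k : ℕ} (hk : 1 ≤ k) {m : Fin k → ℕ}
    (hsum : ∑ i, m i = n) (hpos : ∀ i, 1 ≤ m i) :
    (∏ i, ((m i - 1)! : ℚ)) * (∏ i, (m i : ℚ)) / (∏ i ∈ range k, (suffixSum m i : ℚ)) *
        ((n ! : ℚ) / ∏ i, ((m i)! : ℚ)) =
      ((n - 1)! : ℚ) * ∏ j ∈ suffixSet m, 1 / (j : ℚ) := by
  have hfac : (∏ i, ((m i - 1)! : ℚ)) * (∏ i, (m i : ℚ)) = ∏ i, ((m i)! : ℚ) := by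
    rw [← prod_mul_distrib]
    refine prod_congr rfl fun i _ => ?_
    rw [mul_comm, ← Nat.cast_mul, Nat.mul_factorial_pred (by have := hpos i; omega)]
  have hn : n ≠ 0 := by
    have := hpos ⟨0, hk⟩
    have := single_le_sum (fun i _ => Nat.zero_le (m i)) (mem_univ (⟨0, hk⟩ : Fin k))
    omega
  have hden : (∏ i ∈ range k, (suffixSum m i : ℚ)) =
      (∏ i ∈ range (k - 1), (suffixSum m (i + 1) : ℚ)) * n := by
    obtain ⟨j, rfl⟩ : ∃ j, k = j + 1 := ⟨k - 1, by omega⟩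
    rw [prod_range_succ', suffixSum_zero, hsum, Nat.add_sub_cancel]
  have hnum : (n ! : ℚ) = n * (n - 1)! := by
    rw [← Nat.cast_mul, Nat.mul_factorial_pred hn]
  rw [suffixSet, prod_image (injOn_suffixSum_succ hpos), hfac, hden, hnum, prod_div_distrib,
    prod_const_one]
  have : (∏ i, ((m i)! : ℚ)) ≠ 0 := prod_ne_zero_iff.mpr fun i _ => by positivity
  field_simp

end LieMonomialCount

open LieMonomialCount

theorem lie_monomial_count_eq_elementary_symmetric (n k : ℕ) (hn : 2 ≤ n) (hk : 1 ≤ k) :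
    (∑ m ∈ (Fintype.piFinset fun _ : Fin k => Finset.range (n + 1)) |>.filter
        (fun m : Fin k → ℕ =>
          (∑ i, m i) = n ∧ (∀ i, 1 ≤ m i) ∧ 2 ≤ m ⟨k - 1, by omega⟩),
      (∏ i : Fin k, ((Nat.factorial (m i - 1) : ℕ) : ℚ)) *
        (∏ i : Fin k, (m i : ℚ)) /
        (∏ i ∈ Finset.range k,
          ((∑ j ∈ Finset.univ.filter (fun j : Fin k => i ≤ (j : ℕ)), m j : ℕ) : ℚ)) *
        (((Nat.factorial n : ℕ) : ℚ) / ∏ i : Fin k, ((Nat.factorial (m i) : ℕ) : ℚ))) =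
    ((Nat.factorial (n - 1) : ℕ) : ℚ) *
      ∑ S ∈ (Finset.Icc 2 (n - 1)).powersetCard (k - 1), ∏ j ∈ S, (1 / (j : ℚ)) := by
  calc _ = ∑ m ∈ compositionsLastGeTwo n k hk,
          ((n - 1)! : ℚ) * ∏ j ∈ suffixSet m, 1 / (j : ℚ) :=
        sum_congr rfl fun m hm =>
          let ⟨hsum, hpos, _⟩ := mem_compositionsLastGeTwo.mp hm
          prod_factorial_div_prod_suffixSum_eq hk hsum hpos
    _ = _ := by
        rw [← mul_sum, sum_compositionsLastGeTwo_suffixSet hn hk fun S => ∏ j ∈ S, 1 / (j : ℚ)]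
end
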